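/- Let λ, 𝔢 ∈ ℝ, let I ⊆ ℝ be an interval, and let ℱ, K : I → ℝ be twice differentiable functions satisfying the evolution equations ℱ'' + K'ℱ' = 𝔢² e^{2(ℱ−K)} and K'' + (K')² = 2λ on I. Define C := 3(K')² − 2(ℱ')² + 2𝔢² e^{2(ℱ−K)} − 6λ. Then C satisfies the linear differential equation C' = −2K'C on I; consequently, if C vanishes at some point r₀ ∈ I, then C vanishes identically on I. -/

import Mathlib

/-!
In `C'` the second derivatives `ℱ''` and `K''` are eliminated by adding
`6K'·(K'' + K'² - 2λ) - 4ℱ'·(ℱ'' + K'ℱ' - 𝔢²e^{2(ℱ-K)})`, and what remains is `-2K'C`.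
Then `C·e^{2K}` has zero derivative, so it is constant on the interval, and since `e^{2K}`
never vanishes the zero set of `C` is either empty or all of `I`.
-/

open Real

theorem Convex.eq_of_hasDerivWithinAt_zero {s : Set ℝ} (hs : Convex ℝ s) {f : ℝ → ℝ}
    (hf : ∀ x ∈ s, HasDerivWithinAt f 0 s x) {x y : ℝ} (hx : x ∈ s) (hy : y ∈ s) :
    f x = f y := by
  have bound : ∀ z ∈ s, ‖(0 : ℝ)‖ ≤ 0 := fun _ _ => norm_zero.le
  simpa only [(dist_eq_norm _ _).symm, zero_mul, dist_le_zero, eq_comm] using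
    hs.norm_image_sub_le_of_norm_hasDerivWithin_le hf bound hx hy

theorem hasDerivWithinAt_mul_exp_eq_zero {s : Set ℝ} {x : ℝ} {f g : ℝ → ℝ} {g' : ℝ}
    (hf : HasDerivWithinAt f (-g' * f x) s x) (hg : HasDerivWithinAt g g' s x) :
    HasDerivWithinAt (fun y => f y * exp (g y)) 0 s x :=
  (hf.mul hg.exp).congr_deriv (by ring)

theorem Convex.eq_zero_of_hasDerivWithinAt_eq_neg_mul {s : Set ℝ} (hs : Convex ℝ s)
    {f g g' : ℝ → ℝ} (hf : ∀ x ∈ s, HasDerivWithinAt f (-g' x * f x) s x)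
    (hg : ∀ x ∈ s, HasDerivWithinAt g (g' x) s x) {x₀ : ℝ} (hx₀ : x₀ ∈ s) (h₀ : f x₀ = 0)
    {x : ℝ} (hx : x ∈ s) : f x = 0 := by
  have hconst : f x * exp (g x) = f x₀ * exp (g x₀) :=
    hs.eq_of_hasDerivWithinAt_zero (fun y hy =>
      hasDerivWithinAt_mul_exp_eq_zero (hf y hy) (hg y hy)) hx hx₀
  rw [h₀, zero_mul] at hconst
  exact (mul_eq_zero.mp hconst).resolve_right (exp_ne_zero _)

noncomputable def hamiltonianConstraint (lam ee : ℝ) (F F' K K' : ℝ → ℝ) (r : ℝ) : ℝ :=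
  3 * K' r ^ 2 - 2 * F' r ^ 2 + 2 * ee ^ 2 * exp (2 * (F r - K r)) - 6 * lam

theorem hasDerivWithinAt_hamiltonianConstraint {s : Set ℝ} {r lam ee : ℝ}
    {F F' F'' K K' K'' : ℝ → ℝ}
    (hF : HasDerivWithinAt F (F' r) s r) (hF' : HasDerivWithinAt F' (F'' r) s r)
    (hK : HasDerivWithinAt K (K' r) s r) (hK' : HasDerivWithinAt K' (K'' r) s r)
    (heq1 : F'' r + K' r * F' r = ee ^ 2 * exp (2 * (F r - K r)))
    (heq2 : K'' r + K' r ^ 2 = 2 * lam) :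
    HasDerivWithinAt (hamiltonianConstraint lam ee F F' K K')
      (-2 * K' r * hamiltonianConstraint lam ee F F' K K' r) s r := by
  have hE := ((hF.sub hK).const_mul 2).exp
  have hD := ((((hK'.pow 2).const_mul 3).sub ((hF'.pow 2).const_mul 2)).add
    (hE.const_mul (2 * ee ^ 2))).sub_const (6 * lam)
  refine hD.congr_deriv ?_
  simp only [hamiltonianConstraint, Nat.cast_ofNat, Pi.sub_apply]
  linear_combination 6 * K' r * heq2 - 4 * F' r * heq1

theorem hamiltonian_constraint_propagation
    (lam ee : ℝ)
    -- the interval I ⊆ ℝ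
    (I : Set ℝ) (hI : I.OrdConnected)
    -- twice differentiable functions ℱ, K with derivatives ℱ', ℱ'', K', K''
    (F F' F'' K K' K'' : ℝ → ℝ)
    (hF : ∀ r ∈ I, HasDerivWithinAt F (F' r) I r)
    (hF' : ∀ r ∈ I, HasDerivWithinAt F' (F'' r) I r)
    (hK : ∀ r ∈ I, HasDerivWithinAt K (K' r) I r)
    (hK' : ∀ r ∈ I, HasDerivWithinAt K' (K'' r) I r)
    -- the evolution equations
    (heq1 : ∀ r ∈ I, F'' r + K' r * F' r = ee ^ 2 * Real.exp (2 * (F r - K r)))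
    (heq2 : ∀ r ∈ I, K'' r + (K' r) ^ 2 = 2 * lam)
    -- the Hamiltonian constraint
    (C : ℝ → ℝ)
    (hC : C = fun r => 3 * (K' r) ^ 2 - 2 * (F' r) ^ 2
        + 2 * ee ^ 2 * Real.exp (2 * (F r - K r)) - 6 * lam) :
    -- C satisfies C' = -2K'C on I …
    (∀ r ∈ I, HasDerivWithinAt C (-2 * K' r * C r) I r) ∧
    -- … hence it vanishes identically as soon as it vanishes at one point
    (∀ r₀ ∈ I, C r₀ = 0 → ∀ r ∈ I, C r = 0) := by
  have hCderiv : ∀ r ∈ I, HasDerivWithinAt C (-2 * K' r * C r) I r := fun r hr => by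
    subst hC
    exact hasDerivWithinAt_hamiltonianConstraint (hF r hr) (hF' r hr) (hK r hr) (hK' r hr)
      (heq1 r hr) (heq2 r hr)
  refine ⟨hCderiv, fun r₀ hr₀ h₀ r hr => ?_⟩
  refine hI.convex.eq_zero_of_hasDerivWithinAt_eq_neg_mul (g := fun r => 2 * K r)
    (fun x hx => ?_) (fun x hx => (hK x hx).const_mul 2) hr₀ h₀ hr
  simpa only [neg_mul] using hCderiv x hx
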